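/- Let 0 < α < 3 and let 0 < q < 1 be real. Then the 3-point position autocorrelation function of the slicer map with sublinear power-law time lags satisfies φ_α(m₁, m₁ + ⌊m₁^q⌋, m₁ + 2⌊m₁^q⌋) / m₁^{3-α} → 6/(3-α) as m₁ → ∞, where ⌊·⌋ denotes the integer floor of the real power m₁^q. -/

import Mathlib

open Filter Topology

/-- Slicer lengths: `l_M(α) = (M + 2^(1/α))^(-α)`. -/
noncomputable def slicerLen (α : ℝ) (M : ℕ) : ℝ :=
  ((M : ℝ) + (2 : ℝ) ^ (1 / α)) ^ (-α)

/-- Interval lengths: `Δ_k(α) = l_{k-1}(α) - l_k(α)` (for `k ≥ 1`). -/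
noncomputable def slicerDelta (α : ℝ) (k : ℕ) : ℝ :=
  slicerLen α (k - 1) - slicerLen α k

/-- `j`-th position moment of the slicer map at time `m`. -/
noncomputable def slicerMoment (α j : ℝ) (m : ℕ) : ℝ :=
  2 * ∑ k ∈ Finset.Icc 1 m, (k : ℝ) ^ j * slicerDelta α k
    + 2 * (m : ℝ) ^ j * slicerLen α m

/-- 3-point position autocorrelation function of the slicer map. -/
noncomputable def slicerPhi (α : ℝ) (m₁ m₂ m₃ : ℕ) : ℝ :=
  2 * ∑ k ∈ Finset.Icc 1 m₁, (k : ℝ) ^ 3 * slicerDelta α k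
    + 2 * (m₁ : ℝ) * ∑ k ∈ Finset.Icc (m₁ + 1) m₂, (k : ℝ) ^ 2 * slicerDelta α k
    + 2 * (m₁ : ℝ) * (m₂ : ℝ) * ∑ k ∈ Finset.Icc (m₂ + 1) m₃, (k : ℝ) * slicerDelta α k
    + 2 * (m₁ : ℝ) * (m₂ : ℝ) * (m₃ : ℝ) * slicerLen α m₃

section Helpers

open Asymptotics Finset

lemma slicer_slopeLim (p : ℝ) {f : ℕ → ℝ} (hf : Tendsto f atTop (𝓝 0))
    (hne : ∀ᶠ i in atTop, f i ≠ 0) :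
    Tendsto (fun i => ((1 + f i) ^ p - 1) / f i) atTop (𝓝 p) := by
  have h1 : HasDerivAt (fun x : ℝ => x ^ p) (p * (1:ℝ) ^ (p - 1)) 1 :=
    Real.hasDerivAt_rpow_const (Or.inl one_ne_zero)
  have h2 := hasDerivAt_iff_tendsto_slope.mp h1
  have h3 : Tendsto (fun i => 1 + f i) atTop (𝓝[≠] (1:ℝ)) := by
    apply tendsto_nhdsWithin_of_tendsto_nhds_of_eventually_within
    · simpa using tendsto_const_nhds.add hf
    · filter_upwards [hne] with i hi
      simp only [Set.mem_compl_iff, Set.mem_singleton_iff]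
      intro h
      exact hi (by linarith [h])
  have h4 := h2.comp h3
  rw [Real.one_rpow, mul_one] at h4
  convert h4 using 2 with i
  simp [slope_def_field, Real.one_rpow]

lemma slicer_keyLim (p : ℝ) {g : ℕ → ℝ} (hg : Tendsto g atTop atTop) :
    Tendsto (fun i => ((1 + 1 / g i) ^ p - 1) * g i) atTop (𝓝 p) := by
  have hf : Tendsto (fun i => 1 / g i) atTop (𝓝 0) :=
    hg.inv_tendsto_atTop.congr (by simp [one_div])
  have hne : ∀ᶠ i in atTop, 1 / g i ≠ 0 := by
    filter_upwards [hg.eventually_gt_atTop 0] with i hi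
    positivity
  have := slicer_slopeLim p hf hne
  apply this.congr'
  filter_upwards [hg.eventually_gt_atTop 0] with i hi
  field_simp

lemma slicer_constRatio (a b : ℝ) :
    Tendsto (fun i : ℕ => ((i : ℝ) + a) / ((i : ℝ) + b)) atTop (𝓝 1) := by
  have hb : Tendsto (fun i : ℕ => (i : ℝ) + b) atTop atTop :=
    tendsto_atTop_add_const_right _ b tendsto_natCast_atTop_atTop
  have h0 : Tendsto (fun i : ℕ => (a - b) / ((i : ℝ) + b)) atTop (𝓝 0) :=
    tendsto_const_nhds.div_atTop hb
  have h1 : Tendsto (fun i : ℕ => 1 + (a - b) / ((i : ℝ) + b)) atTop (𝓝 (1 + 0)) :=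
    tendsto_const_nhds.add h0
  rw [add_zero] at h1
  apply h1.congr'
  filter_upwards [hb.eventually_gt_atTop 0] with i hi
  field_simp
  ring

lemma slicer_tendsto_sum_div {a b : ℕ → ℝ} {L : ℝ} (hb : ∀ i, 0 < b i)
    (hsum : Tendsto (fun n => ∑ i ∈ range n, b i) atTop atTop)
    (hab : Tendsto (fun i => a i / b i) atTop (𝓝 L)) :
    Tendsto (fun n => (∑ i ∈ range n, a i) / (∑ i ∈ range n, b i)) atTop (𝓝 L) := by
  have h1 : (fun i => a i - L * b i) =o[atTop] b := by
    rw [isLittleO_iff_tendsto (fun i h => absurd h (hb i).ne')]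
    have h : Tendsto (fun i => a i / b i - L) atTop (𝓝 (L - L)) := hab.sub tendsto_const_nhds
    rw [sub_self] at h
    apply h.congr
    intro i
    rw [sub_div, mul_div_assoc, div_self (hb i).ne', mul_one]
  have h2 := h1.sum_range (fun i => (hb i).le) hsum
  have h3 : Tendsto (fun n => (∑ i ∈ range n, (a i - L * b i)) / (∑ i ∈ range n, b i))
      atTop (𝓝 0) := by
    rw [← isLittleO_iff_tendsto']
    · exact h2
    · filter_upwards [hsum.eventually_gt_atTop 0] with n hn h
      exact absurd h hn.ne'
  have h4 : Tendsto (fun n => (∑ i ∈ range n, (a i - L * b i)) / (∑ i ∈ range n, b i) + L)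
      atTop (𝓝 (0 + L)) := h3.add tendsto_const_nhds
  rw [zero_add] at h4
  apply h4.congr'
  filter_upwards [hsum.eventually_gt_atTop 0] with n hn
  rw [sum_sub_distrib, ← mul_sum]
  field_simp
  ring

lemma slicer_bLim (α : ℝ) :
    Tendsto (fun i : ℕ => (((i : ℝ) + 1) ^ (3 - α) - (i : ℝ) ^ (3 - α)) * (i : ℝ) ^ (α - 2))
      atTop (𝓝 (3 - α)) := by
  have h := slicer_keyLim (3 - α) tendsto_natCast_atTop_atTop
  apply h.congr'
  filter_upwards [eventually_gt_atTop 0] with i hi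
  have hi' : (0 : ℝ) < (i : ℝ) := by exact_mod_cast hi
  have h1 : ((i : ℝ) + 1) = (i : ℝ) * (1 + 1 / (i : ℝ)) := by field_simp
  have key : (i : ℝ) ^ (3 - α) * (i : ℝ) ^ (α - 2) = (i : ℝ) := by
    rw [← Real.rpow_add hi']
    norm_num
  calc ((1 + 1 / (i : ℝ)) ^ (3 - α) - 1) * (i : ℝ)
      = ((1 + 1 / (i : ℝ)) ^ (3 - α) - 1) * ((i : ℝ) ^ (3 - α) * (i : ℝ) ^ (α - 2)) := by
        rw [key]
    _ = (((i : ℝ) + 1) ^ (3 - α) - (i : ℝ) ^ (3 - α)) * (i : ℝ) ^ (α - 2) := by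
        rw [h1, Real.mul_rpow hi'.le (by positivity)]
        ring

lemma slicer_aLim {α c : ℝ} (hα : 0 < α) (hc : 0 < c) :
    Tendsto (fun i : ℕ =>
        ((i : ℝ) + 1) ^ 3 * (((i : ℝ) + c) ^ (-α) - ((i : ℝ) + 1 + c) ^ (-α)) * (i : ℝ) ^ (α - 2))
      atTop (𝓝 α) := by
  have hgc : Tendsto (fun i : ℕ => (i : ℝ) + c) atTop atTop :=
    tendsto_atTop_add_const_right _ c tendsto_natCast_atTop_atTop
  have F1 : Tendsto (fun i : ℕ => (((i : ℝ) + 1) / ((i : ℝ) + c)) ^ 3) atTop (𝓝 1) := by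
    have := (slicer_constRatio 1 c).pow 3
    rwa [one_pow] at this
  have F2 : Tendsto (fun i : ℕ => (((i : ℝ) + c) / (i : ℝ)) ^ (2 - α)) atTop (𝓝 1) := by
    have hb : Tendsto (fun i : ℕ => ((i : ℝ) + c) / (i : ℝ)) atTop (𝓝 1) := by
      have := slicer_constRatio c 0
      simpa using this
    have := hb.rpow_const (p := 2 - α) (Or.inl one_ne_zero)
    rwa [Real.one_rpow] at this
  have F3 : Tendsto (fun i : ℕ => (1 - (1 + 1 / ((i : ℝ) + c)) ^ (-α)) * ((i : ℝ) + c))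
      atTop (𝓝 α) := by
    have h := (slicer_keyLim (-α) hgc).neg
    rw [neg_neg] at h
    apply h.congr
    intro i
    ring
  have H := (F1.mul F2).mul F3
  rw [one_mul, one_mul] at H
  apply H.congr'
  filter_upwards [eventually_gt_atTop 0] with i hi
  have hi' : (0 : ℝ) < (i : ℝ) := by exact_mod_cast hi
  set x : ℝ := (i : ℝ) + c with hxdef
  have hx : (0 : ℝ) < x := by positivity
  have h5 : ((i : ℝ) + 1 + c) = x * (1 + 1 / x) := by field_simp; ring
  have hsl : ((i : ℝ) + c) ^ (-α) - ((i : ℝ) + 1 + c) ^ (-α)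
      = x ^ (-α) * (1 - (1 + 1 / x) ^ (-α)) := by
    rw [h5, Real.mul_rpow hx.le (by positivity)]
    ring
  have hdiv2 : (x / (i : ℝ)) ^ (2 - α) = x ^ (2 - α) * (i : ℝ) ^ (α - 2) := by
    rw [Real.div_rpow hx.le hi'.le]
    rw [show (α - 2) = -(2 - α) by ring, Real.rpow_neg hi'.le]
    ring
  have hxx : x ^ (2 - α) * x / x ^ (3 : ℕ) = x ^ (-α) := by
    rw [← Real.rpow_natCast x 3]
    nth_rewrite 2 [← Real.rpow_one x]
    rw [← Real.rpow_add hx, ← Real.rpow_sub hx]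
    norm_num
    ring_nf
  calc (((i : ℝ) + 1) / x) ^ 3 * (x / (i : ℝ)) ^ (2 - α)
        * ((1 - (1 + 1 / x) ^ (-α)) * x)
      = (((i : ℝ) + 1) ^ 3 / x ^ 3) * (x ^ (2 - α) * (i : ℝ) ^ (α - 2))
        * ((1 - (1 + 1 / x) ^ (-α)) * x) := by rw [div_pow, hdiv2]
    _ = ((i : ℝ) + 1) ^ 3 * (x ^ (2 - α) * x / x ^ (3 : ℕ)) * (1 - (1 + 1 / x) ^ (-α))
        * (i : ℝ) ^ (α - 2) := by ring
    _ = ((i : ℝ) + 1) ^ 3 * (x ^ (-α) * (1 - (1 + 1 / x) ^ (-α))) * (i : ℝ) ^ (α - 2) := by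
        rw [hxx]; ring
    _ = ((i : ℝ) + 1) ^ 3 * (((i : ℝ) + c) ^ (-α) - ((i : ℝ) + 1 + c) ^ (-α))
        * (i : ℝ) ^ (α - 2) := by rw [hsl]

lemma slicer_piece1 {α c : ℝ} (hα : 0 < α) (hα3 : α < 3) (hc : 0 < c) :
    Tendsto (fun n : ℕ =>
        (∑ i ∈ range n,
          ((i : ℝ) + 1) ^ 3 * (((i : ℝ) + c) ^ (-α) - ((i : ℝ) + 1 + c) ^ (-α)))
          / (n : ℝ) ^ (3 - α)) atTop (𝓝 (α / (3 - α))) := by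
  set a : ℕ → ℝ := fun i =>
    ((i : ℝ) + 1) ^ 3 * (((i : ℝ) + c) ^ (-α) - ((i : ℝ) + 1 + c) ^ (-α)) with ha
  set b : ℕ → ℝ := fun i => ((i : ℝ) + 1) ^ (3 - α) - (i : ℝ) ^ (3 - α) with hbdef
  have h3α : (0 : ℝ) < 3 - α := by linarith
  have hb : ∀ i, 0 < b i := by
    intro i
    have := Real.rpow_lt_rpow (Nat.cast_nonneg i) (by linarith : (i : ℝ) < (i : ℝ) + 1) h3α
    simpa [hbdef, sub_pos] using this
  have hsumb : ∀ n : ℕ, ∑ i ∈ range n, b i = (n : ℝ) ^ (3 - α) := by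
    intro n
    have := Finset.sum_range_sub (fun i : ℕ => (i : ℝ) ^ (3 - α)) n
    simp only [Nat.cast_add, Nat.cast_one] at this
    rw [hbdef]
    simp only []
    rw [this, Nat.cast_zero, Real.zero_rpow h3α.ne', sub_zero]
  have hsumTop : Tendsto (fun n => ∑ i ∈ range n, b i) atTop atTop := by
    simp only [hsumb]
    exact (tendsto_rpow_atTop h3α).comp tendsto_natCast_atTop_atTop
  have hab : Tendsto (fun i => a i / b i) atTop (𝓝 (α / (3 - α))) := by
    have hdiv := (slicer_aLim hα hc).div (slicer_bLim α) (by linarith : (3:ℝ) - α ≠ 0)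
    apply hdiv.congr'
    filter_upwards [eventually_gt_atTop 0] with i hi
    have hi' : (0 : ℝ) < (i : ℝ) := by exact_mod_cast hi
    have hne : (i : ℝ) ^ (α - 2) ≠ 0 := (Real.rpow_pos_of_pos hi' _).ne'
    simp only [Pi.div_apply]
    rw [mul_div_mul_right _ _ hne]
  have := slicer_tendsto_sum_div hb hsumTop hab
  apply this.congr
  intro n
  rw [hsumb]

lemma slicerLen_pos {α : ℝ} (hα : 0 < α) (M : ℕ) : 0 < slicerLen α M := by
  unfold slicerLen
  have hc : (0:ℝ) < (2:ℝ) ^ (1/α) := Real.rpow_pos_of_pos two_pos _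
  positivity

lemma slicerLen_anti {α : ℝ} (hα : 0 < α) {j k : ℕ} (h : j ≤ k) :
    slicerLen α k ≤ slicerLen α j := by
  unfold slicerLen
  have hc : (0:ℝ) < (2:ℝ) ^ (1/α) := Real.rpow_pos_of_pos two_pos _
  have hj : (0:ℝ) < (j:ℝ) + (2:ℝ)^(1/α) := by positivity
  have hk : (j:ℝ) + (2:ℝ)^(1/α) ≤ (k:ℝ) + (2:ℝ)^(1/α) := by
    have : (j:ℝ) ≤ k := by exact_mod_cast h
    linarith
  rw [Real.rpow_neg (by positivity), Real.rpow_neg (by positivity)]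
  exact inv_anti₀ (Real.rpow_pos_of_pos hj _) (Real.rpow_le_rpow hj.le hk hα.le)

lemma slicerDelta_nonneg {α : ℝ} (hα : 0 < α) (k : ℕ) : 0 ≤ slicerDelta α k := by
  unfold slicerDelta
  have := slicerLen_anti hα (Nat.sub_le k 1)
  linarith

lemma slicer_teleDelta (α : ℝ) (a : ℕ) : ∀ b : ℕ, a ≤ b →
    ∑ k ∈ Icc (a+1) b, slicerDelta α k = slicerLen α a - slicerLen α b := by
  intro b hb
  induction b, hb using Nat.le_induction with
  | base => simp
  | succ b hab ih =>
    rw [Finset.sum_Icc_succ_top (by omega : a + 1 ≤ b + 1), ih]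
    unfold slicerDelta
    simp only [Nat.add_sub_cancel]
    ring

end Helpers

set_option maxHeartbeats 2000000 in
theorem slicer_phi_sublinear_lags (α q : ℝ) (hα : 0 < α) (hα3 : α < 3)
    (hq0 : 0 < q) (hq1 : q < 1) :
    Tendsto (fun m₁ : ℕ =>
        slicerPhi α m₁ (m₁ + ⌊(m₁ : ℝ) ^ q⌋₊) (m₁ + 2 * ⌊(m₁ : ℝ) ^ q⌋₊)
          / (m₁ : ℝ) ^ (3 - α)) atTop
      (𝓝 (6 / (3 - α))) := by
  have hc : (0:ℝ) < (2:ℝ) ^ (1/α) := Real.rpow_pos_of_pos two_pos _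
  set c : ℝ := (2:ℝ) ^ (1/α) with hcdef
  have h3α : (0:ℝ) < 3 - α := by linarith
  -- basic limits
  have hMtop : Tendsto (fun m : ℕ => (m:ℝ)) atTop atTop := tendsto_natCast_atTop_atTop
  have hNtop : Tendsto (fun m : ℕ => (⌊(m:ℝ)^q⌋₊ : ℝ)) atTop atTop := by
    apply tendsto_natCast_atTop_atTop.comp
    exact tendsto_nat_floor_atTop.comp ((tendsto_rpow_atTop hq0).comp tendsto_natCast_atTop_atTop)
  have hNM : Tendsto (fun m : ℕ => (⌊(m:ℝ)^q⌋₊ : ℝ) / m) atTop (𝓝 0) := by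
    have hup : Tendsto (fun m : ℕ => (m:ℝ) ^ (q - 1)) atTop (𝓝 0) := by
      have h := (tendsto_rpow_neg_atTop (by linarith : (0:ℝ) < 1 - q)).comp
        tendsto_natCast_atTop_atTop
      apply h.congr
      intro m
      simp only [Function.comp_apply]
      rw [show -(1 - q) = q - 1 by ring]
    apply tendsto_of_tendsto_of_tendsto_of_le_of_le' tendsto_const_nhds hup
    · filter_upwards [eventually_gt_atTop 0] with m hm
      positivity
    · filter_upwards [eventually_gt_atTop 0] with m hm
      have hm' : (0:ℝ) < m := by exact_mod_cast hm
      have h1 : (⌊(m:ℝ)^q⌋₊ : ℝ) ≤ (m:ℝ) ^ q := Nat.floor_le (by positivity)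
      calc (⌊(m:ℝ)^q⌋₊ : ℝ) / m ≤ (m:ℝ)^q / m := by gcongr
        _ = (m:ℝ)^(q-1) := by rw [Real.rpow_sub hm', Real.rpow_one]
  -- ratio limits
  have hr2 : Tendsto (fun m : ℕ => ((m:ℝ) + (⌊(m:ℝ)^q⌋₊ : ℝ)) / m) atTop (𝓝 1) := by
    have h : Tendsto (fun m : ℕ => 1 + (⌊(m:ℝ)^q⌋₊ : ℝ)/m) atTop (𝓝 (1 + 0)) :=
      tendsto_const_nhds.add hNM
    rw [add_zero] at h
    apply h.congr'
    filter_upwards [eventually_gt_atTop 0] with m hm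
    have hm' : (0:ℝ) < m := by exact_mod_cast hm
    field_simp
  have hr3 : Tendsto (fun m : ℕ => ((m:ℝ) + 2 * (⌊(m:ℝ)^q⌋₊ : ℝ)) / m) atTop (𝓝 1) := by
    have h : Tendsto (fun m : ℕ => 1 + 2 * ((⌊(m:ℝ)^q⌋₊ : ℝ)/m)) atTop (𝓝 (1 + 2 * 0)) :=
      tendsto_const_nhds.add (hNM.const_mul 2)
    rw [mul_zero, add_zero] at h
    apply h.congr'
    filter_upwards [eventually_gt_atTop 0] with m hm
    have hm' : (0:ℝ) < m := by exact_mod_cast hm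
    field_simp
  have hcM : Tendsto (fun m : ℕ => c / (m:ℝ)) atTop (𝓝 0) := tendsto_const_nhds.div_atTop hMtop
  have hr4 : Tendsto (fun m : ℕ => (m:ℝ) / ((m:ℝ) + 2 * (⌊(m:ℝ)^q⌋₊ : ℝ) + c)) atTop (𝓝 1) := by
    have h : Tendsto (fun m : ℕ => ((m:ℝ) + 2 * (⌊(m:ℝ)^q⌋₊ : ℝ) + c) / m) atTop (𝓝 1) := by
      have h' : Tendsto (fun m : ℕ => 1 + 2 * ((⌊(m:ℝ)^q⌋₊ : ℝ)/m) + c/m) atTop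
          (𝓝 (1 + 2 * 0 + 0)) := (tendsto_const_nhds.add (hNM.const_mul 2)).add hcM
      rw [mul_zero, add_zero, add_zero] at h'
      apply h'.congr'
      filter_upwards [eventually_gt_atTop 0] with m hm
      have hm' : (0:ℝ) < m := by exact_mod_cast hm
      field_simp
    have h2 := h.inv₀ one_ne_zero
    rw [inv_one] at h2
    apply h2.congr'
    filter_upwards [eventually_gt_atTop 0] with m hm
    have hm' : (0:ℝ) < m := by exact_mod_cast hm
    rw [inv_div]
  have hr5 : Tendsto (fun m : ℕ => (m:ℝ) / ((m:ℝ) + (⌊(m:ℝ)^q⌋₊ : ℝ) + c)) atTop (𝓝 1) := by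
    have h : Tendsto (fun m : ℕ => ((m:ℝ) + (⌊(m:ℝ)^q⌋₊ : ℝ) + c) / m) atTop (𝓝 1) := by
      have h' : Tendsto (fun m : ℕ => 1 + (⌊(m:ℝ)^q⌋₊ : ℝ)/m + c/m) atTop
          (𝓝 (1 + 0 + 0)) := (tendsto_const_nhds.add hNM).add hcM
      rw [add_zero, add_zero] at h'
      apply h'.congr'
      filter_upwards [eventually_gt_atTop 0] with m hm
      have hm' : (0:ℝ) < m := by exact_mod_cast hm
      field_simp
    have h2 := h.inv₀ one_ne_zero
    rw [inv_one] at h2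
    apply h2.congr'
    filter_upwards [eventually_gt_atTop 0] with m hm
    have hm' : (0:ℝ) < m := by exact_mod_cast hm
    rw [inv_div]
  have hMc : Tendsto (fun m : ℕ => (m:ℝ)/((m:ℝ)+c)) atTop (𝓝 1) := by
    have := slicer_constRatio 0 c
    simpa using this
  -- the small increments f2, f3
  have hf2 : Tendsto (fun m : ℕ => (⌊(m:ℝ)^q⌋₊ : ℝ)/((m:ℝ)+c)) atTop (𝓝 0) := by
    have h := hNM.mul hMc
    rw [zero_mul] at h
    apply h.congr'
    filter_upwards [eventually_gt_atTop 0] with m hm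
    have hm' : (0:ℝ) < m := by exact_mod_cast hm
    have hb : (0:ℝ) < (m:ℝ) + c := by positivity
    field_simp
  have hf2ne : ∀ᶠ m : ℕ in atTop, (⌊(m:ℝ)^q⌋₊ : ℝ)/((m:ℝ)+c) ≠ 0 := by
    filter_upwards [hNtop.eventually_gt_atTop 0, eventually_gt_atTop 0] with m h1 h2
    have hm' : (0:ℝ) < m := by exact_mod_cast h2
    have hb : (0:ℝ) < (m:ℝ) + c := by positivity
    exact (div_pos h1 hb).ne'
  have hw2 : Tendsto (fun m : ℕ =>
      (1 - (1 + (⌊(m:ℝ)^q⌋₊ : ℝ)/((m:ℝ)+c)) ^ (-α)) / ((⌊(m:ℝ)^q⌋₊ : ℝ)/((m:ℝ)+c)))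
      atTop (𝓝 α) := by
    have h := (slicer_slopeLim (-α) hf2 hf2ne).neg
    rw [neg_neg] at h
    apply h.congr
    intro m
    rw [← neg_div, neg_sub]
  have hf3 : Tendsto (fun m : ℕ => (⌊(m:ℝ)^q⌋₊ : ℝ)/((m:ℝ)+(⌊(m:ℝ)^q⌋₊ : ℝ)+c)) atTop (𝓝 0) := by
    have h := hNM.mul hr5
    rw [zero_mul] at h
    apply h.congr'
    filter_upwards [eventually_gt_atTop 0] with m hm
    have hm' : (0:ℝ) < m := by exact_mod_cast hm
    have hb : (0:ℝ) < (m:ℝ) + (⌊(m:ℝ)^q⌋₊ : ℝ) + c := by positivity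
    field_simp
  have hf3ne : ∀ᶠ m : ℕ in atTop, (⌊(m:ℝ)^q⌋₊ : ℝ)/((m:ℝ)+(⌊(m:ℝ)^q⌋₊ : ℝ)+c) ≠ 0 := by
    filter_upwards [hNtop.eventually_gt_atTop 0, eventually_gt_atTop 0] with m h1 h2
    have hm' : (0:ℝ) < m := by exact_mod_cast h2
    have hb : (0:ℝ) < (m:ℝ) + (⌊(m:ℝ)^q⌋₊ : ℝ) + c := by positivity
    exact (div_pos h1 hb).ne'
  have hw3 : Tendsto (fun m : ℕ =>
      (1 - (1 + (⌊(m:ℝ)^q⌋₊ : ℝ)/((m:ℝ)+(⌊(m:ℝ)^q⌋₊ : ℝ)+c)) ^ (-α))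
        / ((⌊(m:ℝ)^q⌋₊ : ℝ)/((m:ℝ)+(⌊(m:ℝ)^q⌋₊ : ℝ)+c))) atTop (𝓝 α) := by
    have h := (slicer_slopeLim (-α) hf3 hf3ne).neg
    rw [neg_neg] at h
    apply h.congr
    intro m
    rw [← neg_div, neg_sub]
  -- Term 1
  have hconv : ∀ m : ℕ, ∑ k ∈ Finset.Icc 1 m, (k:ℝ)^3 * slicerDelta α k
      = ∑ i ∈ Finset.range m, ((i:ℝ)+1)^3 * (((i:ℝ)+c)^(-α) - ((i:ℝ)+1+c)^(-α)) := by
    intro m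
    rw [← Finset.Ico_add_one_right_eq_Icc, Finset.sum_Ico_eq_sum_range]
    rw [Nat.add_sub_cancel]
    apply Finset.sum_congr rfl
    intro i _
    have h1 : (1 + i) - 1 = i := by omega
    unfold slicerDelta slicerLen
    rw [h1, ← hcdef]
    push_cast
    ring_nf
  have hT1 : Tendsto (fun m : ℕ =>
      2 * (∑ k ∈ Finset.Icc 1 m, (k:ℝ)^3 * slicerDelta α k) / (m:ℝ)^(3-α)) atTop
      (𝓝 (2 * (α/(3-α)))) := by
    have h := (slicer_piece1 hα hα3 hc).const_mul 2
    apply h.congr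
    intro m
    rw [hconv m, mul_div_assoc]
  -- Term 4
  have hT4 : Tendsto (fun m : ℕ =>
      2 * (m:ℝ) * ((m + ⌊(m:ℝ)^q⌋₊ : ℕ):ℝ) * ((m + 2*⌊(m:ℝ)^q⌋₊ : ℕ):ℝ)
        * slicerLen α (m + 2*⌊(m:ℝ)^q⌋₊) / (m:ℝ)^(3-α)) atTop (𝓝 2) := by
    have hG := ((hr2.mul hr3).mul (hr4.rpow_const (p := α) (Or.inl one_ne_zero))).const_mul 2
    norm_num [Real.one_rpow] at hG
    apply hG.congr'
    filter_upwards [eventually_gt_atTop 0] with m hm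
    have hm' : (0:ℝ) < (m:ℝ) := by exact_mod_cast hm
    have hy : (0:ℝ) < (m:ℝ) + 2*(⌊(m:ℝ)^q⌋₊:ℝ) + c := by positivity
    have hlen : slicerLen α (m + 2*⌊(m:ℝ)^q⌋₊) = ((m:ℝ) + 2*(⌊(m:ℝ)^q⌋₊:ℝ) + c)^(-α) := by
      unfold slicerLen
      rw [← hcdef]
      push_cast
      ring_nf
    rw [hlen]
    have hMα : (0:ℝ) < (m:ℝ)^α := Real.rpow_pos_of_pos hm' _
    have hyα : (0:ℝ) < ((m:ℝ) + 2*(⌊(m:ℝ)^q⌋₊:ℝ) + c)^α := Real.rpow_pos_of_pos hy _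
    rw [Real.div_rpow hm'.le hy.le, Real.rpow_neg hy.le, Real.rpow_sub hm',
      show (3:ℝ) = ((3:ℕ):ℝ) by norm_num, Real.rpow_natCast]
    push_cast
    field_simp
  -- Term 2 (squeeze to 0)
  have hT2 : Tendsto (fun m : ℕ =>
      2 * (m:ℝ) * (∑ k ∈ Finset.Icc (m+1) (m + ⌊(m:ℝ)^q⌋₊), (k:ℝ)^2 * slicerDelta α k)
        / (m:ℝ)^(3-α)) atTop (𝓝 0) := by
    have hV : Tendsto (fun m : ℕ =>
        2 * (m:ℝ) * (((m:ℝ) + (⌊(m:ℝ)^q⌋₊:ℝ))^2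
          * (slicerLen α m - slicerLen α (m + ⌊(m:ℝ)^q⌋₊))) / (m:ℝ)^(3-α)) atTop (𝓝 0) := by
      have hP := (((hr2.pow 2).const_mul 2).mul (hMc.rpow_const (p := α)
        (Or.inl one_ne_zero))).mul hw2 |>.mul hf2
      norm_num [Real.one_rpow] at hP
      apply hP.congr'
      filter_upwards [eventually_gt_atTop 0, hNtop.eventually_gt_atTop 0] with m hm hN
      have hm' : (0:ℝ) < (m:ℝ) := by exact_mod_cast hm
      have hb : (0:ℝ) < (m:ℝ) + c := by positivity
      have hf2m : (⌊(m:ℝ)^q⌋₊:ℝ)/((m:ℝ)+c) ≠ 0 := (div_pos hN hb).ne'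
      have hsl : slicerLen α m - slicerLen α (m + ⌊(m:ℝ)^q⌋₊)
          = ((m:ℝ)+c)^(-α) * (1 - (1 + (⌊(m:ℝ)^q⌋₊:ℝ)/((m:ℝ)+c))^(-α)) := by
        unfold slicerLen
        rw [← hcdef]
        push_cast
        have hsplit : ((m:ℝ) + (⌊(m:ℝ)^q⌋₊:ℝ) + c) = ((m:ℝ)+c) * (1 + (⌊(m:ℝ)^q⌋₊:ℝ)/((m:ℝ)+c)) := by
          field_simp
          ring
        rw [hsplit, Real.mul_rpow hb.le (by positivity)]
        ring
      have hMα : (0:ℝ) < (m:ℝ)^α := Real.rpow_pos_of_pos hm' _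
      have hbα : (0:ℝ) < ((m:ℝ)+c)^α := Real.rpow_pos_of_pos hb _
      have hNne : (⌊(m:ℝ)^q⌋₊:ℝ) ≠ 0 := hN.ne'
      rw [hsl, Real.rpow_neg hb.le, Real.div_rpow hm'.le hb.le, Real.rpow_sub hm',
        show (3:ℝ) = ((3:ℕ):ℝ) by norm_num, Real.rpow_natCast]
      field_simp
    apply tendsto_of_tendsto_of_tendsto_of_le_of_le' tendsto_const_nhds hV
    · filter_upwards with m
      have hS : 0 ≤ ∑ k ∈ Finset.Icc (m+1) (m + ⌊(m:ℝ)^q⌋₊), (k:ℝ)^2 * slicerDelta α k :=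
        Finset.sum_nonneg fun k _ => mul_nonneg (by positivity) (slicerDelta_nonneg hα k)
      have hD : (0:ℝ) ≤ (m:ℝ)^(3-α) := Real.rpow_nonneg (Nat.cast_nonneg m) _
      exact div_nonneg (mul_nonneg (by positivity) hS) hD
    · filter_upwards with m
      have hS : ∑ k ∈ Finset.Icc (m+1) (m + ⌊(m:ℝ)^q⌋₊), (k:ℝ)^2 * slicerDelta α k
          ≤ ((m:ℝ) + (⌊(m:ℝ)^q⌋₊:ℝ))^2 * (slicerLen α m - slicerLen α (m + ⌊(m:ℝ)^q⌋₊)) := by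
        have h1 : ∑ k ∈ Finset.Icc (m+1) (m + ⌊(m:ℝ)^q⌋₊), (k:ℝ)^2 * slicerDelta α k
            ≤ ∑ k ∈ Finset.Icc (m+1) (m + ⌊(m:ℝ)^q⌋₊),
              ((m:ℝ) + (⌊(m:ℝ)^q⌋₊:ℝ))^2 * slicerDelta α k := by
          apply Finset.sum_le_sum
          intro k hk
          have hk2 := (Finset.mem_Icc.mp hk).2
          have hkr : (k:ℝ) ≤ (m:ℝ) + (⌊(m:ℝ)^q⌋₊:ℝ) := by
            have : (k:ℝ) ≤ ((m + ⌊(m:ℝ)^q⌋₊ : ℕ):ℝ) := by exact_mod_cast hk2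
            push_cast at this
            linarith
          exact mul_le_mul_of_nonneg_right
            (pow_le_pow_left₀ (Nat.cast_nonneg k) hkr 2) (slicerDelta_nonneg hα k)
        rw [← Finset.mul_sum] at h1
        rwa [slicer_teleDelta α m (m + ⌊(m:ℝ)^q⌋₊) (Nat.le_add_right _ _)] at h1
      have hD : (0:ℝ) ≤ (m:ℝ)^(3-α) := Real.rpow_nonneg (Nat.cast_nonneg m) _
      gcongr
  -- Term 3 (squeeze to 0)
  have hT3 : Tendsto (fun m : ℕ =>
      2 * (m:ℝ) * ((m + ⌊(m:ℝ)^q⌋₊ : ℕ):ℝ)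
        * (∑ k ∈ Finset.Icc ((m + ⌊(m:ℝ)^q⌋₊) + 1) (m + 2*⌊(m:ℝ)^q⌋₊),
            (k:ℝ) * slicerDelta α k) / (m:ℝ)^(3-α)) atTop (𝓝 0) := by
    have hV : Tendsto (fun m : ℕ =>
        2 * (m:ℝ) * ((m + ⌊(m:ℝ)^q⌋₊ : ℕ):ℝ) * (((m:ℝ) + 2*(⌊(m:ℝ)^q⌋₊:ℝ))
          * (slicerLen α (m + ⌊(m:ℝ)^q⌋₊) - slicerLen α (m + 2*⌊(m:ℝ)^q⌋₊)))
          / (m:ℝ)^(3-α)) atTop (𝓝 0) := by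
      have hP := (((hr2.const_mul 2).mul hr3).mul (hr5.rpow_const (p := α)
        (Or.inl one_ne_zero))).mul hw3 |>.mul hf3
      norm_num [Real.one_rpow] at hP
      apply hP.congr'
      filter_upwards [eventually_gt_atTop 0, hNtop.eventually_gt_atTop 0] with m hm hN
      have hm' : (0:ℝ) < (m:ℝ) := by exact_mod_cast hm
      have hb : (0:ℝ) < (m:ℝ) + (⌊(m:ℝ)^q⌋₊:ℝ) + c := by positivity
      have hf3m : (⌊(m:ℝ)^q⌋₊:ℝ)/((m:ℝ)+(⌊(m:ℝ)^q⌋₊:ℝ)+c) ≠ 0 := (div_pos hN hb).ne'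
      have hsl : slicerLen α (m + ⌊(m:ℝ)^q⌋₊) - slicerLen α (m + 2*⌊(m:ℝ)^q⌋₊)
          = ((m:ℝ)+(⌊(m:ℝ)^q⌋₊:ℝ)+c)^(-α)
            * (1 - (1 + (⌊(m:ℝ)^q⌋₊:ℝ)/((m:ℝ)+(⌊(m:ℝ)^q⌋₊:ℝ)+c))^(-α)) := by
        unfold slicerLen
        rw [← hcdef]
        push_cast
        have hsplit : ((m:ℝ) + 2*(⌊(m:ℝ)^q⌋₊:ℝ) + c)
            = ((m:ℝ)+(⌊(m:ℝ)^q⌋₊:ℝ)+c) * (1 + (⌊(m:ℝ)^q⌋₊:ℝ)/((m:ℝ)+(⌊(m:ℝ)^q⌋₊:ℝ)+c)) := by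
          field_simp
          ring
        rw [show ((m:ℝ) + (2*(⌊(m:ℝ)^q⌋₊:ℕ):ℝ) + c) = ((m:ℝ) + 2*(⌊(m:ℝ)^q⌋₊:ℝ) + c) by push_cast; ring]
        rw [hsplit, Real.mul_rpow hb.le (by positivity)]
        ring
      have hMα : (0:ℝ) < (m:ℝ)^α := Real.rpow_pos_of_pos hm' _
      have hbα : (0:ℝ) < ((m:ℝ)+(⌊(m:ℝ)^q⌋₊:ℝ)+c)^α := Real.rpow_pos_of_pos hb _
      have hNne : (⌊(m:ℝ)^q⌋₊:ℝ) ≠ 0 := hN.ne'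
      rw [hsl, Real.rpow_neg hb.le, Real.div_rpow hm'.le hb.le, Real.rpow_sub hm',
        show (3:ℝ) = ((3:ℕ):ℝ) by norm_num, Real.rpow_natCast]
      push_cast
      field_simp
    apply tendsto_of_tendsto_of_tendsto_of_le_of_le' tendsto_const_nhds hV
    · filter_upwards with m
      have hS : 0 ≤ ∑ k ∈ Finset.Icc ((m + ⌊(m:ℝ)^q⌋₊) + 1) (m + 2*⌊(m:ℝ)^q⌋₊),
          (k:ℝ) * slicerDelta α k :=
        Finset.sum_nonneg fun k _ => mul_nonneg (Nat.cast_nonneg k) (slicerDelta_nonneg hα k)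
      have hD : (0:ℝ) ≤ (m:ℝ)^(3-α) := Real.rpow_nonneg (Nat.cast_nonneg m) _
      exact div_nonneg (mul_nonneg (by positivity) hS) hD
    · filter_upwards with m
      have hS : ∑ k ∈ Finset.Icc ((m + ⌊(m:ℝ)^q⌋₊) + 1) (m + 2*⌊(m:ℝ)^q⌋₊),
          (k:ℝ) * slicerDelta α k
          ≤ ((m:ℝ) + 2*(⌊(m:ℝ)^q⌋₊:ℝ))
            * (slicerLen α (m + ⌊(m:ℝ)^q⌋₊) - slicerLen α (m + 2*⌊(m:ℝ)^q⌋₊)) := by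
        have h1 : ∑ k ∈ Finset.Icc ((m + ⌊(m:ℝ)^q⌋₊) + 1) (m + 2*⌊(m:ℝ)^q⌋₊),
            (k:ℝ) * slicerDelta α k
            ≤ ∑ k ∈ Finset.Icc ((m + ⌊(m:ℝ)^q⌋₊) + 1) (m + 2*⌊(m:ℝ)^q⌋₊),
              ((m:ℝ) + 2*(⌊(m:ℝ)^q⌋₊:ℝ)) * slicerDelta α k := by
          apply Finset.sum_le_sum
          intro k hk
          have hk2 := (Finset.mem_Icc.mp hk).2
          have hkr : (k:ℝ) ≤ (m:ℝ) + 2*(⌊(m:ℝ)^q⌋₊:ℝ) := by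
            have : (k:ℝ) ≤ ((m + 2*⌊(m:ℝ)^q⌋₊ : ℕ):ℝ) := by exact_mod_cast hk2
            push_cast at this
            linarith
          exact mul_le_mul_of_nonneg_right hkr (slicerDelta_nonneg hα k)
        rw [← Finset.mul_sum] at h1
        rwa [slicer_teleDelta α (m + ⌊(m:ℝ)^q⌋₊) (m + 2*⌊(m:ℝ)^q⌋₊) (by omega)] at h1
      have hD : (0:ℝ) ≤ (m:ℝ)^(3-α) := Real.rpow_nonneg (Nat.cast_nonneg m) _
      gcongr
  -- combine
  have final := ((hT1.add hT2).add hT3).add hT4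
  have hval : 2 * (α/(3-α)) + 0 + 0 + 2 = 6/(3-α) := by
    field_simp
    ring
  rw [hval] at final
  apply final.congr
  intro m
  unfold slicerPhi
  rw [add_div, add_div, add_div]
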